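/- arXiv:1402.6041 — 6 statements merged into one kernel-verified Lean document; each statement's English description precedes it below -/
import Mathlib

section
/- Let f, g : [0,1] → [0,2] be two nondecreasing functions with ∫₀¹ f(x) dx = ∫₀¹ g(x) dx = 1. Then for any p ∈ [1,∞), (∫₀¹ |f(x) - g(x)|^p dx)^(1/p) ≤ 2^(1 - 1/p). -/
/-!
Chebyshev's integral inequality for the two nondecreasing functions gives `∫ f g ≥ ∫ f ∫ g = 1`.
For `a, b ∈ [0, 2]` one has `|a - b| ≤ a + b - a b` and `|a - b| ^ p ≤ 2 ^ (p - 1) |a - b|`, so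
`∫ |f - g| ^ p ≤ 2 ^ (p - 1) (∫ f + ∫ g - ∫ f g) ≤ 2 ^ (p - 1)`.
-/

open MeasureTheory Set

lemma abs_sub_le_add_sub_mul {a b : ℝ} (ha : a ∈ Icc (0:ℝ) 2) (hb : b ∈ Icc (0:ℝ) 2) :
    |a - b| ≤ a + b - a * b := by
  obtain ⟨ha0, ha2⟩ := ha
  obtain ⟨hb0, hb2⟩ := hb
  rw [abs_sub_le_iff]
  constructor <;> nlinarith

lemma Real.rpow_le_rpow_sub_one_mul {t c p : ℝ} (ht : 0 ≤ t) (htc : t ≤ c) (hp : 1 ≤ p) :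
    t ^ p ≤ c ^ (p - 1) * t := by
  calc t ^ p = t ^ (p - 1) * t := by
        rw [← Real.rpow_add_one' ht (by linarith), sub_add_cancel]
    _ ≤ c ^ (p - 1) * t := by gcongr

variable {α : Type*} [MeasurableSpace α] {μ : Measure α}

theorem MonovaryOn.integral_mul_integral_le [IsFiniteMeasure μ] {f g : α → ℝ} {s : Set α}
    (hfg : MonovaryOn f g s) (hs : ∀ᵐ x ∂μ, x ∈ s) (hf : Integrable f μ) (hg : Integrable g μ)
    (hfg_int : Integrable (fun x => f x * g x) μ) :
    (∫ x, f x ∂μ) * (∫ x, g x ∂μ) ≤ μ.real univ * ∫ x, f x * g x ∂μ := by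
  -- Integrate `0 ≤ (f y - f x) * (g y - g x)` first in `y`, then in `x`.
  set F := ∫ x, f x ∂μ
  set G := ∫ x, g x ∂μ
  set I := ∫ x, f x * g x ∂μ
  have inner : ∀ x, ∫ y, (f y - f x) * (g y - g x) ∂μ
      = I - f x * G - g x * F + μ.real univ * (f x * g x) := by
    intro x
    have : (fun y => (f y - f x) * (g y - g x))
        = fun y => f y * g y - f x * g y - g x * f y + f x * g x := by
      funext y; ring
    rw [this, integral_add (by fun_prop) (by fun_prop), integral_sub (by fun_prop) (by fun_prop),
      integral_sub (by fun_prop) (by fun_prop), integral_const_mul, integral_const_mul,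
      integral_const, smul_eq_mul]
  have inner_nonneg : 0 ≤ᵐ[μ] fun x => ∫ y, (f y - f x) * (g y - g x) ∂μ := by
    filter_upwards [hs] with x hx
    exact integral_nonneg_of_ae (hs.mono fun y hy => hfg.sub_mul_sub_nonneg hx hy)
  have total : ∫ x, (I - f x * G - g x * F + μ.real univ * (f x * g x)) ∂μ
      = 2 * (μ.real univ * I - F * G) := by
    rw [integral_add (by fun_prop) (by fun_prop), integral_sub (by fun_prop) (by fun_prop),
      integral_sub (by fun_prop) (by fun_prop), integral_mul_const, integral_mul_const,
      integral_const_mul, integral_const, smul_eq_mul]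
    ring
  have double_integral_nonneg := integral_nonneg_of_ae inner_nonneg
  simp only [inner, total] at double_integral_nonneg
  linarith

theorem integral_rpow_abs_sub_le_of_monovaryOn [IsProbabilityMeasure μ] {f g : α → ℝ} {s : Set α}
    (hfg : MonovaryOn f g s) (hs : ∀ᵐ x ∂μ, x ∈ s) (hfm : AEMeasurable f μ)
    (hgm : AEMeasurable g μ) (hf : ∀ᵐ x ∂μ, f x ∈ Icc (0:ℝ) 2) (hg : ∀ᵐ x ∂μ, g x ∈ Icc (0:ℝ) 2)
    (hf_int : ∫ x, f x ∂μ = 1) (hg_int : ∫ x, g x ∂μ = 1) {p : ℝ} (hp : 1 ≤ p) :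
    ∫ x, |f x - g x| ^ p ∂μ ≤ 2 ^ (p - 1) := by
  have hfi : Integrable f μ := Integrable.of_mem_Icc 0 2 hfm hf
  have hgi : Integrable g μ := Integrable.of_mem_Icc 0 2 hgm hg
  have hfgi : Integrable (fun x => f x * g x) μ :=
    Integrable.of_mem_Icc 0 4 (hfm.mul hgm) <| by
      filter_upwards [hf, hg] with x ⟨hf0, hf2⟩ ⟨hg0, hg2⟩
      exact ⟨by positivity, by nlinarith⟩
  have chebyshev : 1 ≤ ∫ x, f x * g x ∂μ := by
    simpa [hf_int, hg_int] using hfg.integral_mul_integral_le hs hfi hgi hfgi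
  have pointwise : ∀ᵐ x ∂μ, |f x - g x| ^ p ≤ 2 ^ (p - 1) * (f x + g x - f x * g x) := by
    filter_upwards [hf, hg] with x hfx hgx
    calc |f x - g x| ^ p ≤ 2 ^ (p - 1) * |f x - g x| :=
          Real.rpow_le_rpow_sub_one_mul (abs_nonneg _)
            (abs_sub_le_iff.2 ⟨by linarith [hfx.2, hgx.1], by linarith [hfx.1, hgx.2]⟩) hp
      _ ≤ 2 ^ (p - 1) * (f x + g x - f x * g x) := by gcongr; exact abs_sub_le_add_sub_mul hfx hgx
  calc ∫ x, |f x - g x| ^ p ∂μ ≤ ∫ x, 2 ^ (p - 1) * (f x + g x - f x * g x) ∂μ :=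
        integral_mono_of_nonneg (.of_forall fun _ => by positivity) (by fun_prop) pointwise
    _ = 2 ^ (p - 1) * (2 - ∫ x, f x * g x ∂μ) := by
        rw [integral_const_mul, integral_sub (by fun_prop) hfgi, integral_add hfi hgi, hf_int,
          hg_int, one_add_one_eq_two]
    _ ≤ 2 ^ (p - 1) := by
        have : (0:ℝ) < 2 ^ (p - 1) := by positivity
        nlinarith

theorem stmt_0 (f g : ℝ → ℝ)
    (hf_mono : MonotoneOn f (Set.Icc 0 1)) (hg_mono : MonotoneOn g (Set.Icc 0 1))
    (hf_range : ∀ x ∈ Set.Icc (0:ℝ) 1, f x ∈ Set.Icc (0:ℝ) 2)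
    (hg_range : ∀ x ∈ Set.Icc (0:ℝ) 1, g x ∈ Set.Icc (0:ℝ) 2)
    (hf_int : ∫ x in (0:ℝ)..1, f x = 1) (hg_int : ∫ x in (0:ℝ)..1, g x = 1)
    (p : ℝ) (hp : 1 ≤ p) :
    (∫ x in (0:ℝ)..1, |f x - g x| ^ p) ^ (1 / p) ≤ 2 ^ (1 - 1 / p) := by
  have : IsProbabilityMeasure (volume.restrict (Ioc (0:ℝ) 1)) := ⟨by simp⟩
  have hs : ∀ᵐ x ∂volume.restrict (Ioc (0:ℝ) 1), x ∈ Icc (0:ℝ) 1 :=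
    (ae_restrict_mem measurableSet_Ioc).mono fun _ hx => Ioc_subset_Icc_self hx
  have hf_Ioc := hf_mono.mono Ioc_subset_Icc_self
  have hg_Ioc := hg_mono.mono Ioc_subset_Icc_self
  rw [intervalIntegral.integral_of_le zero_le_one] at hf_int hg_int ⊢
  have key := integral_rpow_abs_sub_le_of_monovaryOn (hf_mono.monovaryOn hg_mono) hs
    (aemeasurable_restrict_of_monotoneOn measurableSet_Ioc hf_Ioc)
    (aemeasurable_restrict_of_monotoneOn measurableSet_Ioc hg_Ioc)
    (hs.mono hf_range) (hs.mono hg_range) hf_int hg_int hp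
  calc (∫ x in Ioc 0 1, |f x - g x| ^ p) ^ (1 / p) ≤ (2 ^ (p - 1)) ^ (1 / p) := by gcongr
    _ = 2 ^ (1 - 1 / p) := by
        rw [← Real.rpow_mul zero_le_two]
        congr 1
        field_simp
end

section
/- Let f, g : [0,1] → [0,2] be nondecreasing functions with ∫₀¹ f = ∫₀¹ g = 1. Then ∫₀¹ |f(x) - g(x)| dx ≤ 1. -/
/-!
The integrand is bounded pointwise by `|a - b| ≤ a + b - a b` for `a, b ∈ [0, 2]`, so
`∫ |f - g| ≤ 2 - ∫ f g`, and Chebyshev's integral inequality for the similarly ordered `f`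
and `g` gives `∫ f g ≥ (∫ f)(∫ g) = 1`.
-/

open MeasureTheory Set

lemma mul_abs_sub_le {a b c : ℝ} (ha : a ∈ Icc 0 c) (hb : b ∈ Icc 0 c) :
    c * |a - b| ≤ c * (a + b) - 2 * (a * b) := by
  obtain ⟨ha₀, hac⟩ := ha
  obtain ⟨hb₀, hbc⟩ := hb
  rcases abs_cases (a - b) with ⟨habs, -⟩ | ⟨habs, -⟩ <;> rw [habs] <;> nlinarith

section ProbabilityMeasure

variable {α : Type*} [MeasurableSpace α] {μ : Measure α} [IsProbabilityMeasure μ]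
  {f g : α → ℝ} {s : Set α}

lemma integral_sub_mul_sub (hf : Integrable f μ) (hg : Integrable g μ)
    (hfg : Integrable (fun x ↦ f x * g x) μ) (x : α) :
    ∫ y, (f y - f x) * (g y - g x) ∂μ =
      ∫ y, f y * g y ∂μ - g x * ∫ y, f y ∂μ - f x * ∫ y, g y ∂μ + f x * g x := by
  have hexpand : (fun y ↦ (f y - f x) * (g y - g x)) =
      fun y ↦ f y * g y - g x * f y - f x * g y + f x * g x := by
    funext y; ring
  have h₁ : Integrable (fun y ↦ f y * g y - g x * f y) μ := hfg.sub (hf.const_mul _)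
  have h₂ : Integrable (fun y ↦ f y * g y - g x * f y - f x * g y) μ :=
    h₁.sub (hg.const_mul _)
  rw [hexpand, integral_add h₂ (integrable_const _), integral_sub h₁ (hg.const_mul _),
    integral_sub hfg (hf.const_mul _), integral_const_mul, integral_const_mul,
    integral_const, probReal_univ, one_smul]

theorem integral_mul_integral_le_integral_mul_of_monovaryOn (hf : Integrable f μ)
    (hg : Integrable g μ) (hfg : Integrable (fun x ↦ f x * g x) μ)
    (hmono : MonovaryOn f g s) (hs : ∀ᵐ x ∂μ, x ∈ s) :
    (∫ x, f x ∂μ) * ∫ x, g x ∂μ ≤ ∫ x, f x * g x ∂μ := by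
  have hpointwise : ∀ᵐ x ∂μ, 0 ≤
      ∫ y, f y * g y ∂μ - g x * ∫ y, f y ∂μ - f x * ∫ y, g y ∂μ + f x * g x := by
    filter_upwards [hs] with x hx
    rw [← integral_sub_mul_sub hf hg hfg]
    exact integral_nonneg_of_ae <| by
      filter_upwards [hs] with y hy using hmono.sub_mul_sub_nonneg hx hy
  have hint := integral_nonneg_of_ae hpointwise
  have h₁ : Integrable (fun x ↦ ∫ y, f y * g y ∂μ - g x * ∫ y, f y ∂μ) μ :=
    (integrable_const _).sub (hg.mul_const _)
  have h₂ : Integrable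
      (fun x ↦ ∫ y, f y * g y ∂μ - g x * ∫ y, f y ∂μ - f x * ∫ y, g y ∂μ) μ :=
    h₁.sub (hf.mul_const _)
  rw [integral_add h₂ hfg, integral_sub h₁ (hf.mul_const _),
    integral_sub (integrable_const _) (hg.mul_const _), integral_mul_const, integral_mul_const,
    integral_const, probReal_univ, one_smul] at hint
  linarith

theorem mul_integral_abs_sub_le_of_monovaryOn {c : ℝ} (hf : Integrable f μ)
    (hg : Integrable g μ) (hmono : MonovaryOn f g s) (hs : ∀ᵐ x ∂μ, x ∈ s)
    (hfc : ∀ᵐ x ∂μ, f x ∈ Icc 0 c) (hgc : ∀ᵐ x ∂μ, g x ∈ Icc 0 c) :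
    c * ∫ x, |f x - g x| ∂μ ≤
      c * (∫ x, f x ∂μ + ∫ x, g x ∂μ) - 2 * ((∫ x, f x ∂μ) * ∫ x, g x ∂μ) := by
  have hfg : Integrable (fun x ↦ f x * g x) μ := by
    refine hg.bdd_mul (c := c) hf.aestronglyMeasurable ?_
    filter_upwards [hfc] with x hx
    rw [Real.norm_eq_abs, abs_le]
    constructor <;> linarith [hx.1, hx.2]
  calc c * ∫ x, |f x - g x| ∂μ = ∫ x, c * |f x - g x| ∂μ := (integral_const_mul _ _).symm
    _ ≤ ∫ x, (c * (f x + g x) - 2 * (f x * g x)) ∂μ := by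
      refine integral_mono_ae (((hf.sub hg).abs).const_mul _)
        (((hf.add hg).const_mul _).sub (hfg.const_mul _)) ?_
      filter_upwards [hfc, hgc] with x hxf hxg using mul_abs_sub_le hxf hxg
    _ = c * (∫ x, f x ∂μ + ∫ x, g x ∂μ) - 2 * ∫ x, f x * g x ∂μ := by
      have hsum : Integrable (fun x ↦ c * (f x + g x)) μ := (hf.add hg).const_mul _
      rw [integral_sub hsum (hfg.const_mul _), integral_const_mul, integral_const_mul,
        integral_add hf hg]
    _ ≤ _ := by
      linarith [integral_mul_integral_le_integral_mul_of_monovaryOn hf hg hfg hmono hs]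

end ProbabilityMeasure

theorem stmt_1 (f g : ℝ → ℝ)
    (hf_mono : MonotoneOn f (Set.Icc 0 1)) (hg_mono : MonotoneOn g (Set.Icc 0 1))
    (hf_range : ∀ x ∈ Set.Icc (0:ℝ) 1, f x ∈ Set.Icc (0:ℝ) 2)
    (hg_range : ∀ x ∈ Set.Icc (0:ℝ) 1, g x ∈ Set.Icc (0:ℝ) 2)
    (hf_int : ∫ x in (0:ℝ)..1, f x = 1) (hg_int : ∫ x in (0:ℝ)..1, g x = 1) :
    ∫ x in (0:ℝ)..1, |f x - g x| ≤ 1 := by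
  have : IsProbabilityMeasure (volume.restrict (Icc (0:ℝ) 1)) := ⟨by simp⟩
  have hs : ∀ᵐ x ∂volume.restrict (Icc (0:ℝ) 1), x ∈ Icc (0:ℝ) 1 :=
    ae_restrict_mem measurableSet_Icc
  simp only [intervalIntegral.integral_of_le zero_le_one, ← integral_Icc_eq_integral_Ioc]
    at hf_int hg_int ⊢
  have key := mul_integral_abs_sub_le_of_monovaryOn (c := 2)
    (hf_mono.integrableOn_isCompact isCompact_Icc) (hg_mono.integrableOn_isCompact isCompact_Icc)
    (hf_mono.monovaryOn hg_mono) hs (hs.mono hf_range) (hs.mono hg_range)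
  rw [hf_int, hg_int] at key
  linarith
end

section
/- Let N ≥ 1 and let α = (α₁,…,α_N), β = (β₁,…,β_N) be vectors in ℝ^N with 0 ≤ α₁ ≤ ⋯ ≤ α_N ≤ 2, 0 ≤ β₁ ≤ ⋯ ≤ β_N ≤ 2, and ∑ᵢ αᵢ = ∑ᵢ βᵢ = N. Then ∑ᵢ |αᵢ − βᵢ| ≤ N. -/
open Finset

/-!
Write `d = α - β`, so `∑ d = 0` and `∑ |d| = 2 Z` with `Z` the sum of the positive part of `d`.
Monotonicity and the range `[0, 2]` force `d i - d j ≤ 2` for all `i, j`. Summing this over the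
`p` indices with `d > 0` against the `q` others gives `(p + q) Z ≤ 2 p q ≤ (p + q)² / 2`,
hence `∑ |d| = 2 Z ≤ p + q = N`.
-/

namespace Finset

variable {ι : Type*} {s : Finset ι} {d : ι → ℝ} {c : ℝ}

lemma sum_abs_eq_two_mul_sum_filter_pos (hsum : ∑ i ∈ s, d i = 0) :
    ∑ i ∈ s, |d i| = 2 * ∑ i ∈ s with 0 < d i, d i := by
  have hsplit := sum_filter_add_sum_filter_not s (fun i => 0 < d i) d
  have hpos : ∑ i ∈ s with 0 < d i, |d i| = ∑ i ∈ s with 0 < d i, d i :=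
    sum_congr rfl fun i hi => abs_of_pos (mem_filter.1 hi).2
  have hnonpos : ∑ i ∈ s with ¬0 < d i, |d i| = -∑ i ∈ s with ¬0 < d i, d i := by
    rw [← sum_neg_distrib]
    exact sum_congr rfl fun i hi => abs_of_nonpos (not_lt.1 (mem_filter.1 hi).2)
  rw [← sum_filter_add_sum_filter_not s (fun i => 0 < d i), hpos, hnonpos]
  linarith

lemma card_mul_sum_filter_pos_le (hsum : ∑ i ∈ s, d i = 0)
    (hosc : ∀ i ∈ s, ∀ j ∈ s, d i - d j ≤ c) :
    #s * ∑ i ∈ s with 0 < d i, d i ≤ c * #{i ∈ s | 0 < d i} * #{i ∈ s | ¬0 < d i} := by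
  set P := s.filter (fun i => 0 < d i)
  set Q := s.filter (fun i => ¬0 < d i)
  have hQ : ∑ j ∈ Q, d j = -∑ i ∈ P, d i := by
    linarith [sum_filter_add_sum_filter_not s (fun i => 0 < d i) d]
  have hcard : (#s : ℝ) = #P + #Q := by
    exact_mod_cast (card_filter_add_card_filter_not (fun i => 0 < d i)).symm
  calc (#s : ℝ) * ∑ i ∈ P, d i = ∑ i ∈ P, ∑ j ∈ Q, (d i - d j) := by
        simp only [sum_sub_distrib, sum_const, nsmul_eq_mul, ← mul_sum, hQ, hcard]
        ring
    _ ≤ ∑ _i ∈ P, ∑ _j ∈ Q, c :=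
        sum_le_sum fun i hi => sum_le_sum fun j hj =>
          hosc i (mem_of_mem_filter i hi) j (mem_of_mem_filter j hj)
    _ = c * #P * #Q := by
        simp only [sum_const, nsmul_eq_mul]
        ring

lemma sum_abs_le_of_sum_eq_zero_of_sub_le (hsum : ∑ i ∈ s, d i = 0)
    (hosc : ∀ i ∈ s, ∀ j ∈ s, d i - d j ≤ c) :
    ∑ i ∈ s, |d i| ≤ c * #s / 2 := by
  obtain rfl | ⟨i₀, hi₀⟩ := s.eq_empty_or_nonempty
  · simp
  have hc : 0 ≤ c := by simpa using hosc i₀ hi₀ i₀ hi₀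
  have hn : (0 : ℝ) < #s := by exact_mod_cast card_pos.2 ⟨i₀, hi₀⟩
  have hcard : (#s : ℝ) = #{i ∈ s | 0 < d i} + #{i ∈ s | ¬0 < d i} := by
    exact_mod_cast (card_filter_add_card_filter_not (fun i => 0 < d i)).symm
  have hdouble := card_mul_sum_filter_pos_le hsum hosc
  have hamgm : 4 * ((#{i ∈ s | 0 < d i} : ℝ) * #{i ∈ s | ¬0 < d i}) ≤ #s ^ 2 := by
    rw [hcard]
    nlinarith [sq_nonneg ((#{i ∈ s | 0 < d i} : ℝ) - #{i ∈ s | ¬0 < d i})]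
  rw [sum_abs_eq_two_mul_sum_filter_pos hsum]
  have : #s * (4 * ∑ i ∈ s with 0 < d i, d i) ≤ #s * (c * #s) := by
    nlinarith [mul_le_mul_of_nonneg_left hamgm hc]
  linarith [le_of_mul_le_mul_left this hn]

end Finset

lemma Monotone.sub_sub_sub_le {ι : Type*} [LinearOrder ι] {α β : ι → ℝ} {a b : ℝ}
    (hα : Monotone α) (hβ : Monotone β) (hα_range : ∀ i, α i ∈ Set.Icc a b)
    (hβ_range : ∀ i, β i ∈ Set.Icc a b) (i j : ι) :
    (α i - β i) - (α j - β j) ≤ b - a := by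
  rcases le_total i j with h | h
  · linarith [hα h, (hβ_range j).2, (hβ_range i).1]
  · linarith [hβ h, (hα_range i).2, (hα_range j).1]

theorem stmt_4_general (N : ℕ) (α β : Fin N → ℝ)
    (hα_mono : Monotone α) (hβ_mono : Monotone β)
    (hα_range : ∀ i, α i ∈ Set.Icc (0:ℝ) 2)
    (hβ_range : ∀ i, β i ∈ Set.Icc (0:ℝ) 2)
    (hα_sum : ∑ i, α i = N) (hβ_sum : ∑ i, β i = N) :
    ∑ i, |α i - β i| ≤ N := by
  have hsum : ∑ i, (α i - β i) = 0 := by rw [sum_sub_distrib, hα_sum, hβ_sum, sub_self]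
  have hosc : ∀ i ∈ univ, ∀ j ∈ univ, (α i - β i) - (α j - β j) ≤ 2 - 0 :=
    fun i _ j _ => hα_mono.sub_sub_sub_le hβ_mono hα_range hβ_range i j
  simpa using sum_abs_le_of_sum_eq_zero_of_sub_le hsum hosc

theorem stmt_4 (N : ℕ) (hN : 1 ≤ N) (α β : Fin N → ℝ)
    (hα_mono : Monotone α) (hβ_mono : Monotone β)
    (hα_range : ∀ i, α i ∈ Set.Icc (0:ℝ) 2)
    (hβ_range : ∀ i, β i ∈ Set.Icc (0:ℝ) 2)
    (hα_sum : ∑ i, α i = N) (hβ_sum : ∑ i, β i = N) :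
    ∑ i, |α i - β i| ≤ N :=
  stmt_4_general N α β hα_mono hβ_mono hα_range hβ_range hα_sum hβ_sum
end

section
/- Define an admissible 2-step function f : [0,1] → [0,2] as one for which there exist a ∈ [0,1/2] and b ∈ [1/2,1] with a < b such that f(x) = 0 for 0 ≤ x < a, f(x) = (2b−1)/(b−a) for a ≤ x < b, and f(x) = 2 for b ≤ x ≤ 1. Then for any two admissible 2-step functions f and g, ∫₀¹ |f(x) − g(x)| dx ≤ 1. -/
/-!
For `x, y ∈ [0, 2]` we have `|x - y| ≤ x + y - x y`, so two functions with values in `[0, 2]`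
and integral `1` satisfy `∫ |f - g| ≤ 2 - ∫ f g`. Admissible 2-step functions are nondecreasing,
so Chebyshev's integral inequality gives `∫ f g ≥ (∫ f) (∫ g) = 1`.
-/

/-- An admissible 2-step function on `[0,1]` with values in `[0,2]`. -/
def Admissible2Step (f : ℝ → ℝ) : Prop :=
  ∃ a b : ℝ, a ∈ Set.Icc (0:ℝ) (1/2) ∧ b ∈ Set.Icc (1/2 : ℝ) 1 ∧ a < b ∧
    ∀ x ∈ Set.Icc (0:ℝ) 1,
      f x = if x < a then 0 else if x < b then (2*b - 1)/(b - a) else 2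

open MeasureTheory Set

lemma abs_sub_le_add_sub_mul_s5 {x y : ℝ} (hx : x ∈ Icc (0 : ℝ) 2) (hy : y ∈ Icc (0 : ℝ) 2) :
    |x - y| ≤ x + y - x * y := by
  obtain ⟨hx0, hx2⟩ := hx
  obtain ⟨hy0, hy2⟩ := hy
  rw [abs_sub_le_iff]
  constructor <;> nlinarith

section Chebyshev

variable {α : Type*} [MeasurableSpace α] {μ : Measure α} [IsProbabilityMeasure μ] {f g : α → ℝ}

/-- Chebyshev's integral inequality. Integrating `(f y - f x) * (g y - g x) ≥ 0` first in `y`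
and then in `x` avoids Fubini. -/
theorem Monovary.integral_mul_integral_le_integral_mul (hfg : Monovary f g)
    (hf : Integrable f μ) (hg : Integrable g μ) (hfg_int : Integrable (fun x => f x * g x) μ) :
    (∫ x, f x ∂μ) * ∫ x, g x ∂μ ≤ ∫ x, f x * g x ∂μ := by
  set F := ∫ x, f x ∂μ
  set G := ∫ x, g x ∂μ
  set H := ∫ x, f x * g x ∂μ
  have inner (x : α) :
      ∫ y, (f y - f x) * (g y - g x) ∂μ = H - g x * F - f x * G + f x * g x := by
    have expand : (fun y => (f y - f x) * (g y - g x))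
        = fun y => f y * g y - g x * f y - f x * g y + f x * g x := by
      ext y; ring
    rw [expand, integral_add, integral_sub, integral_sub, integral_const_mul, integral_const_mul]
    all_goals first | simp [F, G, H] | fun_prop
  have outer : 0 ≤ ∫ x, (H - g x * F - f x * G + f x * g x) ∂μ :=
    integral_nonneg fun x => inner x ▸ integral_nonneg fun y =>
      monovary_iff_forall_mul_nonneg.1 hfg x y
  rw [integral_add, integral_sub, integral_sub, integral_mul_const, integral_mul_const] at outer
  all_goals first | simp at outer | fun_prop
  linarith

theorem Monovary.integral_abs_sub_le_one (hfg : Monovary f g)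
    (hf : Integrable f μ) (hg : Integrable g μ)
    (hf_mem : ∀ x, f x ∈ Icc (0 : ℝ) 2) (hg_mem : ∀ x, g x ∈ Icc (0 : ℝ) 2)
    (hf_one : ∫ x, f x ∂μ = 1) (hg_one : ∫ x, g x ∂μ = 1) :
    ∫ x, |f x - g x| ∂μ ≤ 1 := by
  have hfg_int : Integrable (fun x => f x * g x) μ :=
    hg.bdd_mul (c := 2) hf.aestronglyMeasurable
      (ae_of_all _ fun x => abs_le.2 ⟨by linarith [(hf_mem x).1], (hf_mem x).2⟩)
  have chebyshev := hfg.integral_mul_integral_le_integral_mul hf hg hfg_int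
  calc ∫ x, |f x - g x| ∂μ ≤ ∫ x, (f x + g x - f x * g x) ∂μ :=
        integral_mono (by fun_prop) (by fun_prop)
          fun x => abs_sub_le_add_sub_mul_s5 (hf_mem x) (hg_mem x)
    _ = 2 - ∫ x, f x * g x ∂μ := by
        rw [integral_sub (by fun_prop) hfg_int, integral_add hf hg, hf_one, hg_one]; norm_num
    _ ≤ 1 := by rw [hf_one, hg_one] at chebyshev; linarith

end Chebyshev

noncomputable def twoStep (a b : ℝ) (x : ℝ) : ℝ :=
  if x < a then 0 else if x < b then (2 * b - 1) / (b - a) else 2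

section TwoStep

variable {a b : ℝ}

lemma twoStep_middle_mem_Icc (ha : a ≤ 1 / 2) (hb : 1 / 2 ≤ b) (hab : a < b) :
    (2 * b - 1) / (b - a) ∈ Icc (0 : ℝ) 2 :=
  ⟨div_nonneg (by linarith) (by linarith), (div_le_iff₀ (by linarith)).2 (by linarith)⟩

lemma twoStep_mem_Icc (ha : a ≤ 1 / 2) (hb : 1 / 2 ≤ b) (hab : a < b) (x : ℝ) :
    twoStep a b x ∈ Icc (0 : ℝ) 2 := by
  unfold twoStep
  split_ifs
  exacts [⟨le_rfl, zero_le_two⟩, twoStep_middle_mem_Icc ha hb hab, ⟨zero_le_two, le_rfl⟩]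

lemma twoStep_monotone (ha : a ≤ 1 / 2) (hb : 1 / 2 ≤ b) (hab : a < b) :
    Monotone (twoStep a b) := by
  intro x y hxy
  have hmid := twoStep_middle_mem_Icc ha hb hab
  simp only [twoStep]
  split_ifs <;> linarith [hmid.1, hmid.2]

lemma integral_twoStep (ha0 : 0 ≤ a) (ha : a ≤ 1 / 2) (hb : 1 / 2 ≤ b) (hb1 : b ≤ 1)
    (hab : a < b) : ∫ x in (0 : ℝ)..1, twoStep a b x = 1 := by
  have hmono := twoStep_monotone ha hb hab
  have h₁ : ∫ x in (0 : ℝ)..a, twoStep a b x = ∫ _ in (0 : ℝ)..a, (0 : ℝ) :=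
    intervalIntegral.integral_congr_Ioo_of_le ha0 fun x hx => by simp [twoStep, hx.2]
  have h₂ : ∫ x in a..b, twoStep a b x = ∫ _ in a..b, (2 * b - 1) / (b - a) :=
    intervalIntegral.integral_congr_Ioo_of_le hab.le fun x hx => by
      simp [twoStep, hx.1.not_gt, hx.2]
  have h₃ : ∫ x in b..1, twoStep a b x = ∫ _ in b..1, (2 : ℝ) :=
    intervalIntegral.integral_congr_Ioo_of_le hb1 fun x hx => by
      simp [twoStep, (hab.trans hx.1).not_gt, hx.1.not_gt]
  rw [← intervalIntegral.integral_add_adjacent_intervals hmono.intervalIntegrable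
      hmono.intervalIntegrable,
    ← intervalIntegral.integral_add_adjacent_intervals hmono.intervalIntegrable
      hmono.intervalIntegrable, h₁, h₂, h₃]
  have hba : b - a ≠ 0 := (sub_pos.2 hab).ne'
  simp only [intervalIntegral.integral_const, smul_eq_mul]
  field_simp
  ring

end TwoStep

theorem stmt_5 (f g : ℝ → ℝ) (hf : Admissible2Step f) (hg : Admissible2Step g) :
    ∫ x in (0:ℝ)..1, |f x - g x| ≤ 1 := by
  obtain ⟨a, b, ⟨ha0, ha⟩, ⟨hb, hb1⟩, hab, hf⟩ := hf
  obtain ⟨c, d, ⟨hc0, hc⟩, ⟨hd, hd1⟩, hcd, hg⟩ := hg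
  have hab_mono := twoStep_monotone ha hb hab
  have hcd_mono := twoStep_monotone hc hd hcd
  have : IsProbabilityMeasure (volume.restrict (Ioc (0 : ℝ) 1)) := ⟨by simp⟩
  calc ∫ x in (0 : ℝ)..1, |f x - g x| = ∫ x in (0 : ℝ)..1, |twoStep a b x - twoStep c d x| :=
        intervalIntegral.integral_congr fun x hx => by
          rw [uIcc_of_le zero_le_one] at hx
          simp only [hf x hx, hg x hx, twoStep]
    _ ≤ 1 := by
        have hab_one := integral_twoStep ha0 ha hb hb1 hab
        have hcd_one := integral_twoStep hc0 hc hd hd1 hcd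
        rw [intervalIntegral.integral_of_le zero_le_one] at hab_one hcd_one ⊢
        exact (hab_mono.monovary hcd_mono).integral_abs_sub_le_one
          hab_mono.intervalIntegrable.1 hcd_mono.intervalIntegrable.1
          (twoStep_mem_Icc ha hb hab) (twoStep_mem_Icc hc hd hcd) hab_one hcd_one
end

section
/- Let N ≥ 2 and P = {α ∈ ℝ^N : 0 ≤ α₁ ≤ α₂ ≤ ⋯ ≤ α_N ≤ 2 and ∑ᵢ αᵢ = N}. Then the set of extreme points of the compact convex polytope P equals {(0,…,0, a,…,a, 2,…,2) : k zeros, l twos, N−k−l entries equal to a = (N−2l)/(N−k−l), where 0 ≤ k, l and k + l < N and a ∈ [0,2]}. -/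
/-!
An extreme point `α` of the polytope admits no nonzero direction `d` with `α ± ε d` in the
polytope for small `ε`. Any `d` that is constant on the level sets of `α`, vanishes where `α`
is `0` or `2`, and has zero sum is such a direction, since it keeps every tight constraint tight.
If `α` took two distinct values `u ≠ v` in `(0, 2)`, raising the entries equal to `u` by
`#{α = v}` and lowering those equal to `v` by `#{α = u}` would give one. So `α` is `0`, then a
single value `c`, then `2`, and the sum constraint determines `c`. Conversely, for such a step
vector written as `t x + s y` with `x, y` in the polytope, the bounds force `x` to be `0` and `2`
where it is, monotonicity forces `x` to be constant on the middle block, and the sum constraint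
pins that constant to `c`.
-/

open Finset Filter Topology

theorem Fin.iff_lt_card_filter_of_antitone {N : ℕ} {p : Fin N → Prop} [DecidablePred p]
    (hp : Antitone p) (i : Fin N) : p i ↔ (i : ℕ) < #{i | p i} := by
  have hlower : IsLowerSet {i | p i} := fun _ _ hba ha => hp hba ha
  rcases hlower.eq_univ_or_Iio with h | ⟨a, h⟩
  · have hall (j : Fin N) : p j := Set.eq_univ_iff_forall.1 h j
    simp [hall]
  · have h' : ({i | p i} : Finset (Fin N)) = Iio a := by
      ext; simpa using Set.ext_iff.1 h _
    rw [h', Fin.card_Iio, ← Fin.lt_def, ← mem_Iio, ← h']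
    simp

theorem eq_of_mul_add_mul_eq_of_le {t s a a' b b' : ℝ} (ht : 0 < t) (hs : 0 < s)
    (ha : a ≤ a') (hb : b ≤ b') (h : t * a + s * b = t * a' + s * b') : a = a' := by
  have : t * (a' - a) = 0 := by
    nlinarith [mul_nonneg ht.le (sub_nonneg.2 ha), mul_nonneg hs.le (sub_nonneg.2 hb)]
  linarith [(mul_eq_zero.1 this).resolve_left ht.ne']

theorem notMem_extremePoints_of_eventually_add_smul_mem {E : Type*} [AddCommGroup E]
    [Module ℝ E] {s : Set E} {x d : E} (hd : d ≠ 0)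
    (h : ∀ᶠ ε in 𝓝 (0 : ℝ), x + ε • d ∈ s) : x ∉ s.extremePoints ℝ := by
  have hneg : ∀ᶠ ε in 𝓝 (0 : ℝ), x + (-ε) • d ∈ s := by
    have := tendsto_neg (0 : ℝ)
    rw [neg_zero] at this
    exact this.eventually h
  obtain ⟨ε, ⟨hp, hm⟩, hε⟩ := (((h.and hneg).filter_mono nhdsWithin_le_nhds).and
    (self_mem_nhdsWithin (s := Set.Ioi 0))).exists
  intro hx
  have hmid : x ∈ openSegment ℝ (x + ε • d) (x + (-ε) • d) :=
    ⟨1 / 2, 1 / 2, by norm_num, by norm_num, by norm_num, by module⟩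
  have hεd : ε • d = 0 := by simpa using hx.2 hp hm hmid
  exact hd ((smul_eq_zero.1 hεd).resolve_left hε.ne')

def orderedPolytope (N : ℕ) : Set (Fin N → ℝ) :=
  {α | (∀ i, 0 ≤ α i) ∧ (∀ i, α i ≤ 2) ∧ Monotone α ∧ ∑ i, α i = N}

def stepVec (N k l : ℕ) (c : ℝ) : Fin N → ℝ :=
  fun i => if (i : ℕ) < k then 0 else if (i : ℕ) < N - l then c else 2

theorem sum_stepVec {N k l : ℕ} (hkl : k + l ≤ N) (c : ℝ) :
    ∑ i, stepVec N k l c i = (N - k - l) * c + 2 * l := by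
  set f : ℕ → ℝ := fun j => if j < k then 0 else if j < N - l then c else 2
  have h₀ : ∑ j ∈ Ico 0 k, f j = 0 := sum_eq_zero fun j hj => if_pos (mem_Ico.1 hj).2
  have h₁ : ∑ j ∈ Ico k (N - l), f j = ∑ j ∈ Ico k (N - l), c :=
    sum_congr rfl fun j hj => by
      rw [mem_Ico] at hj
      simp only [f, if_neg (Nat.not_lt.2 hj.1), if_pos hj.2]
  have h₂ : ∑ j ∈ Ico (N - l) N, f j = ∑ j ∈ Ico (N - l) N, 2 :=
    sum_congr rfl fun j hj => by
      rw [mem_Ico] at hj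
      simp only [f, if_neg (show ¬j < k by omega), if_neg (Nat.not_lt.2 hj.1)]
  rw [show ∑ i, stepVec N k l c i = ∑ j ∈ range N, f j from Fin.sum_univ_eq_sum_range f N,
    range_eq_Ico, ← sum_Ico_consecutive f (Nat.zero_le (N - l)) (Nat.sub_le N l),
    ← sum_Ico_consecutive f (Nat.zero_le k) (show k ≤ N - l by omega), h₀, h₁, h₂]
  simp only [sum_const, Nat.card_Ico, nsmul_eq_mul]
  rw [Nat.sub_sub_self (by omega : l ≤ N), Nat.cast_sub (by omega), Nat.cast_sub (by omega)]
  ring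

theorem sum_stepVec_eq_iff {N k l : ℕ} (hkl : k + l < N) (c : ℝ) :
    ∑ i, stepVec N k l c i = N ↔ c = ((N : ℝ) - 2 * l) / ((N : ℝ) - k - l) := by
  have hpos : (0 : ℝ) < N - k - l := by
    have : ((k + l : ℕ) : ℝ) < N := by exact_mod_cast hkl
    push_cast at this
    linarith
  rw [sum_stepVec hkl.le, eq_div_iff hpos.ne']
  constructor <;> intro h <;> linarith

theorem stepVec_mem_orderedPolytope {N k l : ℕ} {c : ℝ} (hc : c ∈ Set.Icc (0 : ℝ) 2)
    (hsum : ∑ i, stepVec N k l c i = N) : stepVec N k l c ∈ orderedPolytope N := by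
  refine ⟨fun i => ?_, fun i => ?_, fun i j hij => ?_, hsum⟩ <;> simp only [stepVec]
  · split_ifs <;> linarith [hc.1]
  · split_ifs <;> linarith [hc.2]
  · have hij' : (i : ℕ) ≤ j := hij
    split_ifs <;> linarith [hc.1, hc.2]

theorem eventually_add_smul_comp_mem_orderedPolytope {N : ℕ} {α : Fin N → ℝ}
    (hα : α ∈ orderedPolytope N) {g : ℝ → ℝ} (hg₀ : g 0 = 0) (hg₂ : g 2 = 0)
    (hg : ∑ i, g (α i) = 0) : ∀ᶠ ε in 𝓝 (0 : ℝ), α + ε • (g ∘ α) ∈ orderedPolytope N := by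
  obtain ⟨h₀, h₂, hmono, hsum⟩ := hα
  have hlim (i : Fin N) : Tendsto (fun ε : ℝ => α i + ε * g (α i)) (𝓝 0) (𝓝 (α i)) :=
    (by fun_prop : Continuous fun ε : ℝ => α i + ε * g (α i)).tendsto' 0 _ (by simp)
  have lower (i : Fin N) : ∀ᶠ ε in 𝓝 (0 : ℝ), 0 ≤ α i + ε * g (α i) := by
    rcases (h₀ i).eq_or_lt with h | h
    · simp [← h, hg₀]
    · exact (tendsto_const_nhds.eventually_lt (hlim i) h).mono fun _ => le_of_lt
  have upper (i : Fin N) : ∀ᶠ ε in 𝓝 (0 : ℝ), α i + ε * g (α i) ≤ 2 := by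
    rcases (h₂ i).eq_or_lt with h | h
    · simp [h, hg₂]
    · exact ((hlim i).eventually_lt tendsto_const_nhds h).mono fun _ => le_of_lt
  have mono (i j : Fin N) :
      ∀ᶠ ε in 𝓝 (0 : ℝ), i ≤ j → α i + ε * g (α i) ≤ α j + ε * g (α j) := by
    by_cases hij : i ≤ j
    · rcases (hmono hij).eq_or_lt with h | h
      · simp [h]
      · exact ((hlim i).eventually_lt (hlim j) h).mono fun _ h _ => h.le
    · exact .of_forall fun _ h => absurd h hij
  filter_upwards [eventually_all.2 lower, eventually_all.2 upper,
    eventually_all.2 fun i => eventually_all.2 (mono i)] with ε hl hu hm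
  refine ⟨hl, hu, fun i j hij => hm i j hij, ?_⟩
  simp [sum_add_distrib, ← mul_sum, hg, hsum]

theorem eq_of_mem_extremePoints_orderedPolytope {N : ℕ} {α : Fin N → ℝ}
    (hα : α ∈ (orderedPolytope N).extremePoints ℝ) {i j : Fin N}
    (hi : α i ∈ Set.Ioo (0 : ℝ) 2) (hj : α j ∈ Set.Ioo (0 : ℝ) 2) : α i = α j := by
  classical
  by_contra hne
  let g : ℝ → ℝ := fun x =>
    #{k | α k = α j} * (if x = α i then 1 else 0) - #{k | α k = α i} * (if x = α j then 1 else 0)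
  have hg₀ : g 0 = 0 := by simp [g, hi.1.ne, hj.1.ne]
  have hg₂ : g 2 = 0 := by simp [g, hi.2.ne', hj.2.ne']
  have hg : ∑ k, g (α k) = 0 := by
    simp only [g, sum_sub_distrib, ← mul_sum, sum_boole]
    ring
  have hd : g ∘ α ≠ 0 := fun h => by
    have := congrFun h i
    simp [g, hne] at this
    exact this rfl
  exact notMem_extremePoints_of_eventually_add_smul_mem hd
    (eventually_add_smul_comp_mem_orderedPolytope hα.1 hg₀ hg₂ hg) hα

theorem eq_stepVec_of_mem_openSegment {N k l : ℕ} {c : ℝ} (hkl : k + l < N)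
    (hsum : ∑ i, stepVec N k l c i = N) {x y : Fin N → ℝ} (hx : x ∈ orderedPolytope N)
    (hy : y ∈ orderedPolytope N) (hxy : stepVec N k l c ∈ openSegment ℝ x y) :
    x = stepVec N k l c := by
  obtain ⟨hx₀, hx₂, hxm, hxs⟩ := hx
  obtain ⟨hy₀, hy₂, hym, -⟩ := hy
  obtain ⟨t, s, ht, hs, hts, h⟩ := hxy
  have hpt (i : Fin N) : t * x i + s * y i = stepVec N k l c i := by simpa using congrFun h i
  set i₀ : Fin N := ⟨k, by omega⟩
  have hx_eq : x = stepVec N k l (x i₀) := by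
    funext i
    have hi := hpt i
    unfold stepVec at hi ⊢
    split_ifs at hi ⊢ with h₁ h₂
    · exact (eq_of_mul_add_mul_eq_of_le ht hs (hx₀ i) (hy₀ i) (by linarith)).symm
    · have hk : i₀ ≤ i := Fin.le_def.2 (Nat.not_lt.1 h₁)
      refine (eq_of_mul_add_mul_eq_of_le ht hs (hxm hk) (hym hk) ?_).symm
      rw [hpt, hi]
      simp [stepVec, i₀, show k < N - l by omega]
    · exact eq_of_mul_add_mul_eq_of_le ht hs (hx₂ i) (hy₂ i)
        (by linear_combination hi - 2 * hts)
  have hc : x i₀ = c := by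
    rw [(sum_stepVec_eq_iff hkl c).1 hsum, ← sum_stepVec_eq_iff hkl, ← hx_eq, hxs]
  rw [hx_eq, hc]

theorem stepVec_mem_extremePoints {N k l : ℕ} {c : ℝ} (hkl : k + l < N)
    (hc : c ∈ Set.Icc (0 : ℝ) 2) (hsum : ∑ i, stepVec N k l c i = N) :
    stepVec N k l c ∈ (orderedPolytope N).extremePoints ℝ :=
  ⟨stepVec_mem_orderedPolytope hc hsum,
    fun _ hx _ hy hxy => eq_stepVec_of_mem_openSegment hkl hsum hx hy hxy⟩

theorem exists_eq_stepVec_of_mem_extremePoints {N : ℕ} (hN : N ≠ 0) {α : Fin N → ℝ}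
    (hα : α ∈ (orderedPolytope N).extremePoints ℝ) :
    ∃ k l : ℕ, k + l < N ∧ ((N : ℝ) - 2 * l) / ((N : ℝ) - k - l) ∈ Set.Icc (0 : ℝ) 2 ∧
      α = stepVec N k l (((N : ℝ) - 2 * l) / ((N : ℝ) - k - l)) := by
  classical
  obtain ⟨hα₀, hα₂, hmono, hsum⟩ := hα.1
  set k := #{i | α i = 0}
  have hzero (i : Fin N) : α i = 0 ↔ (i : ℕ) < k :=
    Fin.iff_lt_card_filter_of_antitone (fun a b hab (hb : α b = 0) => by
      linarith [hα₀ a, hmono hab]) i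
  have hkN : k < N := by
    by_contra! h
    have : ∑ i, α i = 0 := sum_eq_zero fun i _ => (hzero i).2 (by omega)
    exact hN (by exact_mod_cast hsum.symm.trans this)
  -- Taking the `2`s to be the entries above the first nonzero entry `c`, rather than the entries
  -- equal to `2`, keeps the middle block nonempty when no entry lies in `(0, 2)` (then `c = 2`).
  set c := α ⟨k, hkN⟩
  set m := #{i | α i ≤ c}
  have hle (i : Fin N) : α i ≤ c ↔ (i : ℕ) < m :=
    Fin.iff_lt_card_filter_of_antitone (fun a b hab (hb : α b ≤ c) => (hmono hab).trans hb) i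
  have hm : m ≤ N := (card_le_univ _).trans_eq (Fintype.card_fin N)
  have hkm : k < m := (hle _).1 le_rfl
  have hc₀ : 0 < c := (hα₀ _).lt_of_ne fun h => (lt_irrefl k) ((hzero _).1 h.symm)
  have hα_eq : α = stepVec N k (N - m) c := by
    funext i
    unfold stepVec
    rw [Nat.sub_sub_self hm]
    split_ifs with h₁ h₂
    · exact (hzero i).2 h₁
    · exact le_antisymm ((hle i).2 h₂) (hmono (Fin.le_def.2 (Nat.not_lt.1 h₁)))
    · have hci : c < α i := lt_of_not_ge fun h => h₂ ((hle i).1 h)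
      by_contra hne
      have hi2 : α i < 2 := (hα₂ i).lt_of_ne hne
      exact hci.ne (eq_of_mem_extremePoints_orderedPolytope hα ⟨hc₀, hci.trans hi2⟩
        ⟨hc₀.trans hci, hi2⟩)
  have hkl : k + (N - m) < N := by omega
  have hc := (sum_stepVec_eq_iff hkl c).1 (hα_eq ▸ hsum)
  exact ⟨k, N - m, hkl, hc ▸ ⟨hc₀.le, hα₂ _⟩, hc ▸ hα_eq⟩

theorem stmt_17 (N : ℕ) (hN : 2 ≤ N)
    (P : Set (Fin N → ℝ))
    (hP : P = {α : Fin N → ℝ |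
      (∀ i, 0 ≤ α i) ∧ (∀ i, α i ≤ 2) ∧ Monotone α ∧ ∑ i, α i = N}) :
    Set.extremePoints ℝ P =
      {α : Fin N → ℝ | ∃ k l : ℕ, k + l < N ∧
        ((N : ℝ) - 2 * l) / ((N : ℝ) - k - l) ∈ Set.Icc (0:ℝ) 2 ∧
        α = fun i : Fin N => if (i : ℕ) < k then 0
          else if (i : ℕ) < N - l then ((N : ℝ) - 2 * l) / ((N : ℝ) - k - l)
          else 2} := by
  subst hP
  ext α
  constructor
  · exact exists_eq_stepVec_of_mem_extremePoints (by omega)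
  · rintro ⟨k, l, hkl, hc, rfl⟩
    exact stepVec_mem_extremePoints hkl hc ((sum_stepVec_eq_iff hkl _).2 rfl)
end

section
/- Let N ≥ 2 and j ≥ 0 be integers, and let 0 ≤ λ₁ ≤ ⋯ ≤ λ_N ≤ 2 and 0 ≤ λ'₁ ≤ ⋯ ≤ λ'_{N−j} ≤ 2 be sequences satisfying ∑ᵢλᵢ = N, ∑ᵢλ'ᵢ = N−j, and the interlacing inequalities λ_{i−k₁} ≤ λ'ᵢ ≤ λ_{i+k₂} for all i = 1,…,N−j (with the convention λᵢ = 0 for i ≤ 0 and λᵢ = 2 for i > N), where k₁, k₂ ≥ 0 are fixed integers. Then the 1-Wasserstein distance between the empirical measures μ = (1/N)∑ᵢ δ_{λᵢ} and μ' = (1/(N−j))∑ᵢ δ_{λ'ᵢ} satisfies d₁^W(μ, μ') ≤ 2(k₁ + k₂ + j + 1)/N. -/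
/-!
Couple the two empirical measures monotonically: the `i`-th atom of `μ` carries the mass
`[(i - 1) / N, i / N]` of `[0, 1]`, the `i'`-th atom of `μ'` the mass `[(i' - 1) / m, i' / m]`
with `m = N - j`, and the coupling sends to `(λ i, λ' i')` the length of the overlap of these
intervals. Overlaps only occur for `i - j ≤ i' ≤ i`, so by interlacing and monotonicity
`|λ i - λ' i'| ≤ λ (i + k₂) - λ (i - j - k₁)`. Each row of the coupling has total mass `1 / N`,
and the sum over `i` of `λ (i + k₂) - λ (i - j - k₁)` telescopes to at most `2 (k₁ + k₂ + j)`
because the extended sequence takes values in `[0, 2]`.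
-/

open MeasureTheory ENNReal

/-- The `p`-Wasserstein distance between two measures on `ℝ`, defined as the
infimum of transport costs over all couplings. -/
noncomputable def wassersteinDist (p : ℝ) (μ ν : Measure ℝ) : ℝ :=
  sInf {c : ℝ | ∃ π : Measure (ℝ × ℝ),
    π.map Prod.fst = μ ∧ π.map Prod.snd = ν ∧
    c = (∫ z : ℝ × ℝ, |z.1 - z.2| ^ p ∂π) ^ (1 / p)}

open Finset

lemma sum_Icc_one_sub_telescope {G : Type*} [AddCommGroup G] (g : ℤ → G) (n : ℕ) :
    ∑ i ∈ Icc (1 : ℤ) n, (g i - g (i - 1)) = g n - g 0 := by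
  induction n with
  | zero => simp
  | succ n ih =>
    rw [Nat.cast_succ, ← insert_Icc_right_eq_Icc_add_one (by omega),
      sum_insert (by simp), ih, add_sub_cancel_right]
    abel

lemma sum_Icc_sub_shift_le {f : ℤ → ℝ} {a b : ℝ} (hf : ∀ x, f x ∈ Set.Icc a b) (n : ℕ)
    {c d : ℤ} (hcd : c ≤ d) :
    ∑ i ∈ Icc (1 : ℤ) n, (f (i + d) - f (i + c)) ≤ (d - c) * (b - a) := by
  induction d, hcd using Int.leInduction with
  | base => simp
  | succ d _ ih =>
    have step : ∑ i ∈ Icc (1 : ℤ) n, (f (i + (d + 1)) - f (i + d)) ≤ b - a := by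
      have h := sum_Icc_one_sub_telescope (fun i => f (i + (d + 1))) n
      have shift (i : ℤ) : i - 1 + (d + 1) = i + d := by ring
      simp only [shift, zero_add] at h
      linarith [(hf (n + (d + 1))).2, (hf (d + 1)).1]
    calc ∑ i ∈ Icc (1 : ℤ) n, (f (i + (d + 1)) - f (i + c))
        = ∑ i ∈ Icc (1 : ℤ) n, (f (i + (d + 1)) - f (i + d))
          + ∑ i ∈ Icc (1 : ℤ) n, (f (i + d) - f (i + c)) := by
          rw [← sum_add_distrib]; simp only [sub_add_sub_cancel]
      _ ≤ (b - a) + (d - c) * (b - a) := add_le_add step ih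
      _ = ((d + 1 : ℤ) - c) * (b - a) := by push_cast; ring

def overlapLength (a b c d : ℤ) : ℕ := (min b d - max a c).toNat

lemma overlapLength_comm (a b c d : ℤ) : overlapLength a b c d = overlapLength c d a b := by
  rw [overlapLength, overlapLength, min_comm, max_comm]

lemma sum_overlapLength {A B d : ℤ} {K : ℕ} (hA : 0 ≤ A) (hAB : A ≤ B) (hB : B ≤ K * d)
    (hd : 0 ≤ d) :
    ∑ i ∈ Icc (1 : ℤ) K, (overlapLength A B ((i - 1) * d) (i * d) : ℤ) = B - A := by
  set F : ℤ → ℤ := fun x => min B (max A (x * d))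
  have piece (i : ℤ) : (overlapLength A B ((i - 1) * d) (i * d) : ℤ) = F i - F (i - 1) := by
    have : (i - 1) * d ≤ i * d := by nlinarith
    simp only [overlapLength, Int.toNat_eq_max, F]
    generalize (i - 1) * d = x, i * d = y at *
    omega
  rw [sum_congr rfl fun i _ => piece i, sum_Icc_one_sub_telescope]
  simp only [F, zero_mul]
  generalize (K : ℤ) * d = y at *
  omega

/-- The mass sent from `i` to `i'` by the monotone coupling of the uniform measures on `N` and
on `m` points, scaled by `N * m`: the overlap of `[(i - 1) / N, i / N]` and
`[(i' - 1) / m, i' / m]`. -/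
def quantileWeight (N m : ℕ) (i i' : ℤ) : ℕ :=
  overlapLength ((i - 1) * m) (i * m) ((i' - 1) * N) (i' * N)

lemma sum_quantileWeight_right {N m : ℕ} {i : ℤ} (hi : i ∈ Icc (1 : ℤ) N) :
    ∑ i' ∈ Icc (1 : ℤ) m, quantileWeight N m i i' = m := by
  rw [mem_Icc] at hi
  have h := sum_overlapLength (A := (i - 1) * m) (B := i * m) (d := N) (K := m)
    (by nlinarith) (by nlinarith) (by nlinarith) (by positivity)
  have : (m : ℤ) = i * m - (i - 1) * m := by ring
  exact_mod_cast h.trans this.symm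

lemma sum_quantileWeight_left {N m : ℕ} {i' : ℤ} (hi' : i' ∈ Icc (1 : ℤ) m) :
    ∑ i ∈ Icc (1 : ℤ) N, quantileWeight N m i i' = N := by
  rw [mem_Icc] at hi'
  have h := sum_overlapLength (A := (i' - 1) * N) (B := i' * N) (d := m) (K := N)
    (by nlinarith) (by nlinarith) (by nlinarith) (by positivity)
  have : (N : ℤ) = i' * N - (i' - 1) * N := by ring
  simp only [quantileWeight, overlapLength_comm ((_ - 1) * (m : ℤ))]
  exact_mod_cast h.trans this.symm

lemma le_and_le_of_quantileWeight_pos {N m j : ℕ} (hmj : m + j = N) {i i' : ℤ} (hi : 0 ≤ i)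
    (hiN : i ≤ N) (h : 0 < quantileWeight N m i i') : i - j ≤ i' ∧ i' ≤ i := by
  simp only [quantileWeight, overlapLength, Int.lt_toNat, Nat.cast_zero, sub_pos, lt_min_iff,
    max_lt_iff] at h
  obtain ⟨⟨-, h₁⟩, h₂, -⟩ := h
  have hN : (N : ℤ) = m + j := by exact_mod_cast hmj.symm
  constructor <;> by_contra! <;> nlinarith

lemma map_fst_sum_smul_dirac {ι κ α β : Type*} [MeasurableSpace α] [MeasurableSpace β]
    (s : Finset ι) (t : Finset κ) (w : ι → κ → ℝ≥0∞) (x : ι → α) (y : κ → β) :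
    (∑ p ∈ s ×ˢ t, w p.1 p.2 • Measure.dirac (x p.1, y p.2)).map Prod.fst =
      ∑ i ∈ s, (∑ i' ∈ t, w i i') • Measure.dirac (x i) := by
  rw [Measure.map_finset_sum measurable_fst.aemeasurable, sum_product]
  simp only [Measure.map_smul, Measure.map_dirac' measurable_fst, sum_smul]

lemma map_snd_sum_smul_dirac {ι κ α β : Type*} [MeasurableSpace α] [MeasurableSpace β]
    (s : Finset ι) (t : Finset κ) (w : ι → κ → ℝ≥0∞) (x : ι → α) (y : κ → β) :
    (∑ p ∈ s ×ˢ t, w p.1 p.2 • Measure.dirac (x p.1, y p.2)).map Prod.snd =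
      ∑ i' ∈ t, (∑ i ∈ s, w i i') • Measure.dirac (y i') := by
  rw [Measure.map_finset_sum measurable_snd.aemeasurable, sum_product_right]
  simp only [Measure.map_smul, Measure.map_dirac' measurable_snd, sum_smul]

noncomputable def quantileCoupling (N m : ℕ) (x y : ℤ → ℝ) : Measure (ℝ × ℝ) :=
  ((N * m : ℕ) : ℝ≥0∞)⁻¹ • ∑ p ∈ Icc (1 : ℤ) N ×ˢ Icc (1 : ℤ) m,
    (quantileWeight N m p.1 p.2 : ℝ≥0∞) • Measure.dirac (x p.1, y p.2)

lemma quantileCoupling_map_fst {N m : ℕ} (hm : m ≠ 0) (x y : ℤ → ℝ) :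
    (quantileCoupling N m x y).map Prod.fst =
      (N : ℝ≥0∞)⁻¹ • ∑ i ∈ Icc (1 : ℤ) N, Measure.dirac (x i) := by
  rw [quantileCoupling, Measure.map_smul,
    map_fst_sum_smul_dirac _ _ fun i i' => (quantileWeight N m i i' : ℝ≥0∞)]
  simp_rw [← Nat.cast_sum]
  rw [sum_congr rfl fun i hi => by rw [sum_quantileWeight_right hi], ← smul_sum, smul_smul,
    Nat.cast_mul, ENNReal.mul_inv (.inr (natCast_ne_top m)) (.inl (natCast_ne_top N)), mul_assoc,
    ENNReal.inv_mul_cancel (by exact_mod_cast hm) (natCast_ne_top m), mul_one]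

lemma quantileCoupling_map_snd {N m : ℕ} (hN : N ≠ 0) (x y : ℤ → ℝ) :
    (quantileCoupling N m x y).map Prod.snd =
      (m : ℝ≥0∞)⁻¹ • ∑ i' ∈ Icc (1 : ℤ) m, Measure.dirac (y i') := by
  rw [quantileCoupling, Measure.map_smul,
    map_snd_sum_smul_dirac _ _ fun i i' => (quantileWeight N m i i' : ℝ≥0∞)]
  simp_rw [← Nat.cast_sum]
  rw [sum_congr rfl fun i' hi' => by rw [sum_quantileWeight_left hi'], ← smul_sum, smul_smul,
    Nat.cast_mul, ENNReal.mul_inv (.inr (natCast_ne_top m)) (.inl (natCast_ne_top N)),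
    mul_right_comm, ENNReal.inv_mul_cancel (by exact_mod_cast hN) (natCast_ne_top N), one_mul]

lemma integral_quantileCoupling (N m : ℕ) (x y : ℤ → ℝ) (f : ℝ × ℝ → ℝ) :
    ∫ z, f z ∂quantileCoupling N m x y = ((N : ℝ) * m)⁻¹ *
      ∑ p ∈ Icc (1 : ℤ) N ×ˢ Icc (1 : ℤ) m,
        (quantileWeight N m p.1 p.2 : ℝ) * f (x p.1, y p.2) := by
  rw [quantileCoupling, integral_smul_measure, integral_finsetSum_measure fun p _ =>
    (integrable_dirac (by simp)).smul_measure (natCast_ne_top _)]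
  simp [integral_smul_measure]

lemma integral_abs_sub_quantileCoupling_le {N m : ℕ} (hm : m ≠ 0) {x y D : ℤ → ℝ}
    (hD : ∀ i ∈ Icc (1 : ℤ) N, ∀ i' ∈ Icc (1 : ℤ) m, 0 < quantileWeight N m i i' →
      |x i - y i'| ≤ D i) :
    ∫ z, |z.1 - z.2| ∂quantileCoupling N m x y ≤ (∑ i ∈ Icc (1 : ℤ) N, D i) / N := by
  have hweight (i : ℤ) (i' : ℤ) (hi : i ∈ Icc (1 : ℤ) N) (hi' : i' ∈ Icc (1 : ℤ) m) :
      (quantileWeight N m i i' : ℝ) * |x i - y i'| ≤ quantileWeight N m i i' * D i := by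
    rcases (quantileWeight N m i i').eq_zero_or_pos with h | h
    · simp [h]
    · exact mul_le_mul_of_nonneg_left (hD i hi i' hi' h) (Nat.cast_nonneg _)
  have hrow (i : ℤ) (hi : i ∈ Icc (1 : ℤ) N) :
      ∑ i' ∈ Icc (1 : ℤ) m, (quantileWeight N m i i' : ℝ) * D i = m * D i := by
    rw [← sum_mul, ← Nat.cast_sum, sum_quantileWeight_right hi]
  rw [integral_quantileCoupling]
  calc ((N : ℝ) * m)⁻¹ * ∑ p ∈ Icc (1 : ℤ) N ×ˢ Icc (1 : ℤ) m,
        (quantileWeight N m p.1 p.2 : ℝ) * |x p.1 - y p.2|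
      ≤ ((N : ℝ) * m)⁻¹ * ∑ p ∈ Icc (1 : ℤ) N ×ˢ Icc (1 : ℤ) m,
        (quantileWeight N m p.1 p.2 : ℝ) * D p.1 := by
        refine mul_le_mul_of_nonneg_left (sum_le_sum fun p hp => ?_) (by positivity)
        rw [mem_product] at hp
        exact hweight _ _ hp.1 hp.2
    _ = ((N : ℝ) * m)⁻¹ * (m * ∑ i ∈ Icc (1 : ℤ) N, D i) := by
        rw [sum_product, sum_congr rfl hrow, ← mul_sum]
    _ = (∑ i ∈ Icc (1 : ℤ) N, D i) / N := by
        rw [mul_inv, mul_assoc, inv_mul_cancel_left₀ (by exact_mod_cast hm), div_eq_inv_mul]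

lemma wassersteinDist_one_le_integral {μ ν : Measure ℝ} (π : Measure (ℝ × ℝ))
    (hπ₁ : π.map Prod.fst = μ) (hπ₂ : π.map Prod.snd = ν) :
    wassersteinDist 1 μ ν ≤ ∫ z, |z.1 - z.2| ∂π := by
  refine csInf_le ⟨0, ?_⟩ ⟨π, hπ₁, hπ₂, by simp⟩
  rintro c ⟨π', -, -, rfl⟩
  simp only [Real.rpow_one, div_one]
  exact integral_nonneg fun z => abs_nonneg _

section Extension

variable {f : ℤ → ℝ} {n : ℤ} {a b : ℝ}

lemma mem_Icc_of_eq_outside (hab : a ≤ b) (h₀ : ∀ i : ℤ, i ≤ 0 → f i = a)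
    (h₁ : ∀ i : ℤ, n < i → f i = b) (hrange : ∀ i : ℤ, 1 ≤ i → i ≤ n → f i ∈ Set.Icc a b)
    (i : ℤ) : f i ∈ Set.Icc a b := by
  rcases le_or_gt i 0 with hi | hi
  · simpa [h₀ i hi] using hab
  rcases le_or_gt i n with hin | hin
  · exact hrange i hi hin
  · simpa [h₁ i hin] using hab

lemma monotone_of_eq_outside (hab : a ≤ b) (h₀ : ∀ i : ℤ, i ≤ 0 → f i = a)
    (h₁ : ∀ i : ℤ, n < i → f i = b)
    (hmono : ∀ i i' : ℤ, 1 ≤ i → i ≤ i' → i' ≤ n → f i ≤ f i')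
    (hrange : ∀ i : ℤ, 1 ≤ i → i ≤ n → f i ∈ Set.Icc a b) : Monotone f := by
  intro i i' hii'
  have hf := mem_Icc_of_eq_outside hab h₀ h₁ hrange
  rcases le_or_gt i 0 with hi | hi
  · exact h₀ i hi ▸ (hf i').1
  rcases le_or_gt i' n with hi'n | hi'n
  · exact hmono i i' hi hii' hi'n
  · exact h₁ i' hi'n ▸ (hf i).2

end Extension

lemma abs_sub_le_of_interlacing {f g : ℤ → ℝ} (hf : Monotone f) {j k₁ k₂ : ℕ} {i i' : ℤ}
    (hi' : i - j ≤ i' ∧ i' ≤ i) (hg : f (i' - k₁) ≤ g i' ∧ g i' ≤ f (i' + k₂)) :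
    |f i - g i'| ≤ f (i + k₂) - f (i - (j + k₁)) := by
  have h₁ : f (i - (j + k₁)) ≤ f (i' - k₁) := hf (by omega)
  have h₂ : f (i' + k₂) ≤ f (i + k₂) := hf (by omega)
  have h₃ : f (i - (j + k₁)) ≤ f i := hf (by omega)
  have h₄ : f i ≤ f (i + k₂) := hf (by omega)
  rw [abs_sub_le_iff]
  constructor <;> linarith

theorem stmt_19_general (N j k₁ k₂ : ℕ) (hj : j < N)
    (lam lam' : ℤ → ℝ)
    -- conventions: the sequences are extended by `0` below and `2` above
    (hlam0 : ∀ i : ℤ, i ≤ 0 → lam i = 0) (hlam2 : ∀ i : ℤ, (N : ℤ) < i → lam i = 2)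
    -- monotonicity and range
    (hlam_mono : ∀ i i' : ℤ, 1 ≤ i → i ≤ i' → i' ≤ (N : ℤ) → lam i ≤ lam i')
    (hlam_range : ∀ i : ℤ, 1 ≤ i → i ≤ (N : ℤ) → lam i ∈ Set.Icc (0:ℝ) 2)
    -- interlacing inequalities
    (hinter : ∀ i : ℤ, 1 ≤ i → i ≤ (N : ℤ) - (j : ℤ) →
      lam (i - (k₁ : ℤ)) ≤ lam' i ∧ lam' i ≤ lam (i + (k₂ : ℤ))) :
    wassersteinDist 1
      (((N : ℝ≥0∞))⁻¹ • ∑ i ∈ Finset.Icc (1 : ℤ) (N : ℤ), Measure.dirac (lam i))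
      ((((N : ℝ≥0∞) - (j : ℝ≥0∞)))⁻¹ •
        ∑ i ∈ Finset.Icc (1 : ℤ) ((N : ℤ) - (j : ℤ)), Measure.dirac (lam' i))
      ≤ 2 * ((k₁ : ℝ) + k₂ + j + 1) / N := by
  rw [show (N : ℤ) - j = (N - j : ℕ) by omega, ← ENNReal.natCast_sub]
  have hmono := monotone_of_eq_outside zero_le_two hlam0 hlam2 hlam_mono hlam_range
  have hshift := sum_Icc_sub_shift_le (mem_Icc_of_eq_outside zero_le_two hlam0 hlam2 hlam_range)
    N (c := -(j + k₁)) (d := k₂) (by omega)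
  simp only [← sub_eq_add_neg] at hshift
  refine (wassersteinDist_one_le_integral _ (quantileCoupling_map_fst (by omega) lam lam')
    (quantileCoupling_map_snd (by omega) lam lam')).trans
    ((integral_abs_sub_quantileCoupling_le (by omega)
      (D := fun i => lam (i + k₂) - lam (i - (j + k₁))) fun i hi i' hi' hw => ?_).trans ?_)
  · rw [mem_Icc] at hi hi'
    exact abs_sub_le_of_interlacing hmono
      (le_and_le_of_quantileWeight_pos (Nat.sub_add_cancel hj.le) (by omega) hi.2 hw)
      (hinter i' hi'.1 (by omega))
  · gcongr
    push_cast at hshift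
    linarith

theorem stmt_19 (N j k₁ k₂ : ℕ) (hN : 2 ≤ N) (hj : j < N)
    (lam lam' : ℤ → ℝ)
    -- conventions: the sequences are extended by `0` below and `2` above
    (hlam0 : ∀ i : ℤ, i ≤ 0 → lam i = 0) (hlam2 : ∀ i : ℤ, (N : ℤ) < i → lam i = 2)
    (hlam'0 : ∀ i : ℤ, i ≤ 0 → lam' i = 0)
    (hlam'2 : ∀ i : ℤ, (N : ℤ) - (j : ℤ) < i → lam' i = 2)
    -- monotonicity and range
    (hlam_mono : ∀ i i' : ℤ, 1 ≤ i → i ≤ i' → i' ≤ (N : ℤ) → lam i ≤ lam i')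
    (hlam'_mono : ∀ i i' : ℤ, 1 ≤ i → i ≤ i' → i' ≤ (N : ℤ) - (j : ℤ) → lam' i ≤ lam' i')
    (hlam_range : ∀ i : ℤ, 1 ≤ i → i ≤ (N : ℤ) → lam i ∈ Set.Icc (0:ℝ) 2)
    (hlam'_range : ∀ i : ℤ, 1 ≤ i → i ≤ (N : ℤ) - (j : ℤ) → lam' i ∈ Set.Icc (0:ℝ) 2)
    -- trace conditions
    (hlam_sum : ∑ i ∈ Finset.Icc (1 : ℤ) (N : ℤ), lam i = N)
    (hlam'_sum : ∑ i ∈ Finset.Icc (1 : ℤ) ((N : ℤ) - (j : ℤ)), lam' i = (N : ℝ) - (j : ℝ))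
    -- interlacing inequalities
    (hinter : ∀ i : ℤ, 1 ≤ i → i ≤ (N : ℤ) - (j : ℤ) →
      lam (i - (k₁ : ℤ)) ≤ lam' i ∧ lam' i ≤ lam (i + (k₂ : ℤ))) :
    wassersteinDist 1
      (((N : ℝ≥0∞))⁻¹ • ∑ i ∈ Finset.Icc (1 : ℤ) (N : ℤ), Measure.dirac (lam i))
      ((((N : ℝ≥0∞) - (j : ℝ≥0∞)))⁻¹ •
        ∑ i ∈ Finset.Icc (1 : ℤ) ((N : ℤ) - (j : ℤ)), Measure.dirac (lam' i))
      ≤ 2 * ((k₁ : ℝ) + k₂ + j + 1) / N :=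
  stmt_19_general N j k₁ k₂ hj lam lam' hlam0 hlam2 hlam_mono hlam_range hinter
end
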